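/- For k ≥ 1, let S_k be the set of k-tuples (λ^{(1)}, …, λ^{(k)}) of strict partitions satisfying ℓ(λ^{(i)}) ≥ (λ^{(i+1)})_1 for 1 ≤ i < k. Then ∑_{𝛌∈S_k} x^{ℓ(𝛌)} q^{|𝛌|} = ∑_{i_1,…,i_k≥0} q^{∑_{a=1}^k a·i_a(i_a+1)/2 + ∑_{1≤a<b≤k} a·i_a·i_b} x^{∑_{a=1}^k a·i_a} / ((q;q)_{i_1} ⋯ (q;q)_{i_k}). -/

import Mathlib

open Finset PowerSeries

/-- A strict partition: a strictly decreasing finite list of positive integers. -/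
structure StrictPartition where
  parts : List ℕ
  pos : ∀ p ∈ parts, 0 < p
  sorted : parts.Pairwise (· > ·)

namespace StrictPartition

/-- The size `|λ|`. -/
def size (μ : StrictPartition) : ℕ := μ.parts.sum

/-- The number of parts `ℓ(λ)`. -/
def len (μ : StrictPartition) : ℕ := μ.parts.length

/-- The largest part `λ₁` (`0` if `λ` is empty). -/
def first (μ : StrictPartition) : ℕ := μ.parts.headI

end StrictPartition

/-- `(q;q)_n = ∏_{0 ≤ j < n} (1 - q^{j+1})`. -/
noncomputable def qPoch (n : ℕ) : PowerSeries ℚ :=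
  ∏ j ∈ Finset.range n, (1 - (PowerSeries.X : PowerSeries ℚ) ^ (j + 1))

/-!
Sort the tuples by their length differences `i_a = ℓ(λ^{(a)}) - ℓ(λ^{(a+1)})` (with
`λ^{(k+1)} = ∅`), so that `ℓ(λ^{(a)}) = M_a := i_a + ⋯ + i_k` and the total length is `∑ a i_a`.
Once the lengths are fixed the components are independent: `λ^{(a)}` is an `M_a`-subset of
`{1, …, M_{a-1}}`, and `M_a`-subsets of `{1, …, c}` have size generating function
`q^{M_a(M_a+1)/2} (q;q)_c / ((q;q)_{M_a} (q;q)_{c-M_a})`. The first partition is unbounded, but in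
size `N` this is the same as having its parts bounded by any `c ≥ N`. The product of these
`q`-binomials telescopes to `q^{∑ M_a(M_a+1)/2} (q;q)_c / ((q;q)_{c-M_1} ∏ (q;q)_{i_a})`, and
`(q;q)_c / (q;q)_{c-M_1} ≡ 1` modulo `q^{c-M_1+1}`, so taking `c = N + n` leaves the coefficient of
`q^N` unchanged. Finally `∑ M_a(M_a+1)/2` expands to the exponent in the statement.
-/

def triangle (n : ℕ) : ℕ := n * (n + 1) / 2

theorem triangle_add (m n : ℕ) : triangle (m + n) = triangle m + m * n + triangle n := by
  have hm := Nat.even_mul_succ_self m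
  have hn := Nat.even_mul_succ_self n
  rw [Nat.even_iff] at hm hn
  have h : (m + n) * (m + n + 1) = m * (m + 1) + 2 * (m * n) + n * (n + 1) := by ring
  unfold triangle
  omega

theorem triangle_succ (n : ℕ) : triangle (n + 1) = triangle n + (n + 1) := by
  rw [triangle_add]
  unfold triangle
  omega

theorem qPoch_zero : qPoch 0 = 1 := by simp [qPoch]

theorem qPoch_succ (n : ℕ) : qPoch (n + 1) = qPoch n * (1 - X ^ (n + 1)) := by
  simp [qPoch, prod_range_succ]

theorem constantCoeff_qPoch (n : ℕ) : constantCoeff (qPoch n) = 1 := by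
  simp [qPoch, map_prod]

theorem isUnit_qPoch (n : ℕ) : IsUnit (qPoch n) := by
  simp [isUnit_iff_constantCoeff, constantCoeff_qPoch]

theorem qPoch_inv_mul (n : ℕ) : (qPoch n)⁻¹ * qPoch n = 1 :=
  PowerSeries.inv_mul_cancel _ (by simp [constantCoeff_qPoch])

theorem X_pow_dvd_qPoch_sub {c d : ℕ} (h : d ≤ c) : X ^ (d + 1) ∣ qPoch c - qPoch d := by
  obtain ⟨e, rfl⟩ := Nat.exists_eq_add_of_le h
  induction e with
  | zero => simp
  | succ e ih =>
    rw [← add_assoc, qPoch_succ]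
    have hX : (X : PowerSeries ℚ) ^ (d + 1) ∣ X ^ (d + e + 1) := pow_dvd_pow _ (by omega)
    have := dvd_sub (ih (by omega)) (hX.mul_left (qPoch (d + e)))
    convert this using 1
    ring

theorem coeff_eq_of_mul_qPoch_eq {F G : PowerSeries ℚ} {c d N : ℕ}
    (h : G * qPoch d = F * qPoch c) (hdc : d ≤ c) (hN : N ≤ d) : coeff N G = coeff N F := by
  have hdvd : X ^ (d + 1) ∣ G - F := by
    rw [← (isUnit_qPoch d).dvd_mul_right,
      show (G - F) * qPoch d = F * (qPoch c - qPoch d) by rw [sub_mul, h]; ring]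
    exact dvd_mul_of_dvd_right (X_pow_dvd_qPoch_sub hdc) F
  have := X_pow_dvd_iff.mp hdvd N (by omega)
  rwa [map_sub, sub_eq_zero] at this

theorem coeff_prod_sum_X_pow {ι β R : Type*} [Fintype ι] [DecidableEq ι] [CommSemiring R]
    (t : ι → Finset β) (w : ι → β → ℕ) (N : ℕ) :
    coeff N (∏ i, ∑ s ∈ t i, (X : PowerSeries R) ^ w i s) =
      #{S ∈ Fintype.piFinset t | ∑ i, w i (S i) = N} := by
  simp only [prod_univ_sum, prod_pow_eq_pow_sum, map_sum, coeff_X_pow, sum_boole, eq_comm]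

noncomputable def strictPartGF (m c : ℕ) : PowerSeries ℚ :=
  ∑ s ∈ (Icc 1 c).powersetCard m, X ^ ∑ i ∈ s, i

theorem strictPartGF_zero_left (c : ℕ) : strictPartGF 0 c = 1 := by
  simp [strictPartGF]

theorem strictPartGF_of_lt {m c : ℕ} (h : c < m) : strictPartGF m c = 0 := by
  rw [strictPartGF, powersetCard_eq_empty.mpr (by simpa using h), sum_empty]

theorem strictPartGF_succ_succ (m c : ℕ) :
    strictPartGF (m + 1) (c + 1) = strictPartGF (m + 1) c + X ^ (c + 1) * strictPartGF m c := by
  have hc : c + 1 ∉ Icc 1 c := by simp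
  rw [strictPartGF, ← insert_Icc_right_eq_Icc_add_one (by omega), powersetCard_succ_insert hc,
    sum_union, sum_image, strictPartGF, strictPartGF, mul_sum]
  · refine congrArg _ (sum_congr rfl fun s hs => ?_)
    rw [sum_insert fun h => hc (mem_powersetCard.mp hs |>.1 h), pow_add, mul_comm]
  · intro s hs t ht hst
    have hcs := fun h => hc (mem_powersetCard.mp hs |>.1 h)
    have hct := fun h => hc (mem_powersetCard.mp ht |>.1 h)
    rw [← erase_insert hcs, ← erase_insert hct, hst]
  · refine disjoint_left.mpr fun s hs hs' => ?_
    obtain ⟨t, -, rfl⟩ := mem_image.mp hs'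
    exact hc (mem_powersetCard.mp hs |>.1 (mem_insert_self _ _))

theorem strictPartGF_mul_qPoch {m c : ℕ} (h : m ≤ c) :
    strictPartGF m c * qPoch m * qPoch (c - m) = X ^ triangle m * qPoch c := by
  induction c generalizing m with
  | zero =>
    obtain rfl : m = 0 := Nat.le_zero.mp h
    simp [strictPartGF_zero_left, qPoch_zero, triangle]
  | succ c ih =>
    obtain _ | m := m
    · simp [strictPartGF_zero_left, qPoch_zero, triangle]
    rw [strictPartGF_succ_succ, triangle_succ, pow_add, qPoch_succ m, qPoch_succ c]
    obtain hm | rfl := (Nat.le_of_succ_le_succ h).lt_or_eq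
    · obtain ⟨d, rfl⟩ := Nat.exists_eq_add_of_lt hm
      have ih₁ := ih hm
      have ih₂ := ih hm.le
      rw [qPoch_succ m, show m + d + 1 - (m + 1) = d by omega, triangle_succ, pow_add] at ih₁
      rw [show m + d + 1 - m = d + 1 by omega, qPoch_succ d] at ih₂
      rw [show m + d + 1 + 1 - (m + 1) = d + 1 by omega, qPoch_succ d]
      linear_combination (1 - X ^ (d + 1)) * ih₁ + X ^ (m + d + 2) * (1 - X ^ (m + 1)) * ih₂
    · have ih₀ := ih (le_refl m)
      rw [Nat.sub_self, qPoch_zero, mul_one] at ih₀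
      rw [strictPartGF_of_lt (Nat.lt_succ_self m), Nat.sub_self, qPoch_zero]
      linear_combination X ^ (m + 1) * (1 - X ^ (m + 1)) * ih₀

theorem prod_strictPartGF_mul_qPoch (m : ℕ → ℕ) (hm : ∀ a, m (a + 1) ≤ m a) (k : ℕ) :
    (∏ a ∈ range k, strictPartGF (m (a + 1)) (m a)) * qPoch (m k) *
        ∏ a ∈ range k, qPoch (m a - m (a + 1)) =
      X ^ (∑ a ∈ range k, triangle (m (a + 1))) * qPoch (m 0) := by
  induction k with
  | zero => simp
  | succ k ih =>
    rw [prod_range_succ, prod_range_succ, sum_range_succ, pow_add]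
    linear_combination (∏ a ∈ range k, strictPartGF (m (a + 1)) (m a)) *
        (∏ a ∈ range k, qPoch (m a - m (a + 1))) * strictPartGF_mul_qPoch (hm k) +
      X ^ triangle (m (k + 1)) * ih

section TailSum

variable {k : ℕ}

def tailSum (f : Fin k → ℕ) (a : ℕ) : ℕ := ∑ b : Fin k with a ≤ b.val, f b

theorem tailSum_of_le (f : Fin k → ℕ) {a : ℕ} (h : k ≤ a) : tailSum f a = 0 :=
  sum_eq_zero fun b hb => absurd (mem_filter.mp hb).2 (by omega)

theorem tailSum_of_lt (f : Fin k → ℕ) {a : ℕ} (h : a < k) :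
    tailSum f a = f ⟨a, h⟩ + tailSum f (a + 1) := by
  rw [tailSum, tailSum, ← add_sum_erase _ f (a := ⟨a, h⟩) (by simp)]
  congr 2
  ext b
  simp only [mem_erase, mem_filter, mem_univ, true_and, ne_eq, Fin.ext_iff]
  omega

theorem tailSum_succ_le (f : Fin k → ℕ) (a : ℕ) : tailSum f (a + 1) ≤ tailSum f a :=
  sum_le_sum_of_subset fun b => by simp only [mem_filter, mem_univ, true_and]; omega

theorem eq_tailSum {x : ℕ → ℕ} {g : Fin k → ℕ} (hx : ∀ a (h : a < k), x a = g ⟨a, h⟩ + x (a + 1))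
    (hk : x k = 0) {a : ℕ} (ha : a ≤ k) : x a = tailSum g a := by
  induction ha using Nat.decreasingInduction with
  | self => rw [hk, tailSum_of_le g le_rfl]
  | of_succ a h ih => rw [hx a h, ih, tailSum_of_lt g h]

theorem exists_tailSum_eq (ℓ : Fin k → ℕ)
    (hℓ : ∀ (a : Fin k) (h : a.val + 1 < k), ℓ ⟨a.val + 1, h⟩ ≤ ℓ a) :
    ∃ f : Fin k → ℕ, ∀ a : Fin k, tailSum f a = ℓ a := by
  let x : ℕ → ℕ := fun a => if h : a < k then ℓ ⟨a, h⟩ else 0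
  have hx (a : ℕ) (h : a < k) : x a = (x a - x (a + 1)) + x (a + 1) := by
    by_cases h' : a + 1 < k
    · have := hℓ ⟨a, h⟩ h'
      simp only [x, dif_pos h, dif_pos h'] at this ⊢
      omega
    · simp [x, dif_neg h']
  refine ⟨fun b => x b - x (b + 1), fun a => ?_⟩
  rw [← eq_tailSum (x := x) hx (by simp [x]) a.isLt.le]
  simp [x]

theorem tailSum_injective {f g : Fin k → ℕ} (h : ∀ a : Fin k, tailSum f a = tailSum g a) :
    f = g := by
  funext a
  have hf := tailSum_of_lt f a.isLt
  have hg := tailSum_of_lt g a.isLt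
  have hsucc : tailSum f (a + 1) = tailSum g (a + 1) := by
    by_cases ha : a.val + 1 < k
    · exact h ⟨a + 1, ha⟩
    · rw [tailSum_of_le f (by omega), tailSum_of_le g (by omega)]
  simp only [Fin.eta, h a] at hf hg
  omega

theorem sum_range_tailSum (f : Fin k → ℕ) :
    ∑ a ∈ range k, tailSum f a = ∑ b, (b.val + 1) * f b := by
  simp only [tailSum, sum_filter]
  rw [sum_comm]
  refine sum_congr rfl fun b _ => ?_
  rw [← sum_filter, show (range k).filter (· ≤ b.val) = range (b.val + 1) by
    ext a; simp only [mem_filter, mem_range]; omega]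
  simp

theorem tailSum_zero_le (f : Fin k → ℕ) : tailSum f 0 ≤ ∑ b, (b.val + 1) * f b :=
  (sum_le_sum_of_subset (filter_subset _ _)).trans
    (sum_le_sum fun b _ => Nat.le_mul_of_pos_left _ b.val.succ_pos)

theorem sum_range_triangle_tailSum (f : Fin k → ℕ) :
    ∑ a ∈ range k, triangle (tailSum f a) =
      ∑ a, (a.val + 1) * triangle (f a) +
        ∑ p ∈ univ.filter (fun p : Fin k × Fin k => p.1 < p.2), (p.1.val + 1) * f p.1 * f p.2 := by
  -- `triangle_add` makes `triangle ∘ tailSum f` a tail sum itself.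
  have htri (a : ℕ) (ha : a ≤ k) :
      triangle (tailSum f a) = tailSum (fun b => triangle (f b) + f b * tailSum f (b + 1)) a :=
    eq_tailSum (x := fun a => triangle (tailSum f a))
      (fun a h => by rw [tailSum_of_lt f h, triangle_add, add_assoc])
      (by rw [tailSum_of_le f le_rfl]; rfl) ha
  rw [sum_congr rfl fun a ha => htri a (mem_range.mp ha).le, sum_range_tailSum]
  simp only [mul_add, sum_add_distrib, sum_filter, ← univ_product_univ, sum_product]
  congr 1
  refine sum_congr rfl fun a _ => ?_
  rw [tailSum, mul_sum, mul_sum, sum_filter]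
  refine sum_congr rfl fun b _ => ?_
  simp only [Fin.lt_def, Nat.succ_le_iff]
  split_ifs <;> ring

end TailSum

namespace StrictPartition

def toFinset (μ : StrictPartition) : Finset ℕ := μ.parts.toFinset

variable (μ : StrictPartition)

theorem nodup_parts : μ.parts.Nodup := μ.sorted.nodup

theorem card_toFinset : #μ.toFinset = μ.len := List.toFinset_card_of_nodup μ.nodup_parts

theorem sum_toFinset : ∑ x ∈ μ.toFinset, x = μ.size := by
  rw [toFinset, List.sum_toFinset _ μ.nodup_parts, List.map_id']
  rfl

theorem toFinset_subset_Icc_iff {c : ℕ} : μ.toFinset ⊆ Icc 1 c ↔ μ.first ≤ c := by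
  have hpos (x : ℕ) (hx : x ∈ μ.parts) : 1 ≤ x := μ.pos x hx
  obtain ⟨parts, pos, sorted⟩ := μ
  cases parts with
  | nil => simp [toFinset, first]
  | cons p ps =>
    simp only [toFinset, first, List.headI_cons, subset_iff, List.mem_toFinset, mem_Icc]
    constructor
    · exact fun h => (h List.mem_cons_self).2
    · intro h x hx
      refine ⟨hpos x hx, ?_⟩
      rcases List.mem_cons.mp hx with rfl | hx
      · exact h
      · exact ((List.pairwise_cons.mp sorted).1 x hx).le.trans h

theorem len_le_first : μ.len ≤ μ.first := by
  simpa [card_toFinset] using card_le_card ((toFinset_subset_Icc_iff μ).mpr le_rfl)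

theorem first_le_size : μ.first ≤ μ.size := by
  rw [← toFinset_subset_Icc_iff]
  intro x hx
  rw [mem_Icc, ← sum_toFinset]
  exact ⟨μ.pos x (List.mem_toFinset.mp hx),
    single_le_sum (f := fun x => x) (fun _ _ => Nat.zero_le _) hx⟩

theorem toFinset_injective : Function.Injective toFinset := by
  intro μ ν h
  have hperm := List.perm_of_nodup_nodup_toFinset_eq μ.nodup_parts ν.nodup_parts h
  obtain ⟨_, _, _⟩ := μ
  obtain ⟨_, _, _⟩ := ν
  simpa using hperm.eq_of_pairwise' ‹_› ‹_›

theorem exists_toFinset_eq {s : Finset ℕ} (hs : ∀ x ∈ s, 0 < x) :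
    ∃ μ : StrictPartition, μ.toFinset = s :=
  ⟨⟨s.sort (· ≥ ·), fun x hx => hs x ((mem_sort _).mp hx), (sortedGT_sort s).pairwise⟩,
    sort_toFinset _ _⟩

end StrictPartition

def Sk (k : ℕ) : Set (Fin k → StrictPartition) :=
  {L | ∀ (a : Fin k) (h : a.val + 1 < k), (L ⟨a.val + 1, h⟩).first ≤ (L a).len}

def weightedCompositions (k n : ℕ) : Finset (Fin k → ℕ) :=
  {f ∈ Fintype.piFinset fun _ : Fin k => range (n + 1) | ∑ a, (a.val + 1) * f a = n}

section Chains

variable {k : ℕ}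

theorem mem_weightedCompositions_iff_sum_tailSum {n : ℕ} {f : Fin k → ℕ} :
    f ∈ weightedCompositions k n ↔ ∑ a : Fin k, tailSum f a = n := by
  rw [Fin.sum_univ_eq_sum_range (tailSum f), sum_range_tailSum]
  simp only [weightedCompositions, mem_filter, Fintype.mem_piFinset, mem_range,
    and_iff_right_iff_imp]
  rintro rfl a
  exact Nat.lt_succ_of_le ((Nat.le_mul_of_pos_left _ a.val.succ_pos).trans
    (single_le_sum (f := fun b : Fin k => (b.val + 1) * f b) (fun _ _ => Nat.zero_le _)
      (mem_univ a)))

def chainBound (c : ℕ) (f : Fin k → ℕ) : ℕ → ℕ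
  | 0 => c
  | a + 1 => tailSum f a

def chainFiber (c N : ℕ) (f : Fin k → ℕ) : Finset (Fin k → Finset ℕ) :=
  {S ∈ Fintype.piFinset fun a => (Icc 1 (chainBound c f a)).powersetCard (tailSum f a) |
    ∑ a, ∑ i ∈ S a, i = N}

theorem pairwiseDisjoint_chainFiber (c N : ℕ) (s : Set (Fin k → ℕ)) :
    s.PairwiseDisjoint (chainFiber c N) := by
  refine fun f _ g _ hfg => disjoint_left.mpr fun S hf hg => hfg (tailSum_injective fun a => ?_)
  simp only [chainFiber, mem_filter, Fintype.mem_piFinset, mem_powersetCard] at hf hg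
  rw [← (hf.1 a).2, (hg.1 a).2]

theorem image_toFinset_Sk {n N c : ℕ} (hc : N ≤ c) :
    (fun L a => (L a).toFinset) ''
        {L : Fin k → StrictPartition | L ∈ Sk k ∧ ∑ a, (L a).len = n ∧ ∑ a, (L a).size = N} =
      ↑((weightedCompositions k n).biUnion (chainFiber c N)) := by
  ext S
  simp only [Set.mem_image, Set.mem_ofPred_eq, coe_biUnion, Set.mem_iUnion, mem_coe, exists_prop,
    chainFiber, mem_filter, Fintype.mem_piFinset, mem_powersetCard]
  constructor
  · rintro ⟨L, ⟨hchain, hlen, hsize⟩, rfl⟩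
    obtain ⟨f, hf⟩ := exists_tailSum_eq (fun a => (L a).len)
      fun a h => (L _).len_le_first.trans (hchain a h)
    refine ⟨f, mem_weightedCompositions_iff_sum_tailSum.mpr (by simp [hf, hlen]),
      fun a => ⟨?_, ?_⟩, ?_⟩
    · rw [StrictPartition.toFinset_subset_Icc_iff]
      obtain ⟨_ | b, hb⟩ := a
      · refine (L _).first_le_size.trans (le_trans ?_ hc)
        exact hsize ▸
          single_le_sum (f := fun a => (L a).size) (fun _ _ => Nat.zero_le _) (mem_univ _)
      · exact (hchain ⟨b, by omega⟩ hb).trans_eq (hf ⟨b, by omega⟩).symm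
    · rw [StrictPartition.card_toFinset, hf]
    · simp [StrictPartition.sum_toFinset, hsize]
  · rintro ⟨f, hf, hS, hsum⟩
    choose L hL using fun a => StrictPartition.exists_toFinset_eq (s := S a)
      fun x hx => (mem_Icc.mp ((hS a).1 hx)).1
    have hlen (a : Fin k) : (L a).len = tailSum f a := by
      rw [← StrictPartition.card_toFinset, hL, (hS a).2]
    refine ⟨L, ⟨fun a h => ?_, ?_, ?_⟩, funext hL⟩
    · rw [← StrictPartition.toFinset_subset_Icc_iff, hL, hlen]
      exact (hS ⟨a.val + 1, h⟩).1
    · simpa [hlen] using mem_weightedCompositions_iff_sum_tailSum.mp hf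
    · simpa [← StrictPartition.sum_toFinset, hL] using hsum

theorem card_Sk_eq_sum_card_chainFiber {n N c : ℕ} (hc : N ≤ c) :
    Nat.card {L : Fin k → StrictPartition //
        L ∈ Sk k ∧ ∑ a, (L a).len = n ∧ ∑ a, (L a).size = N} =
      ∑ f ∈ weightedCompositions k n, #(chainFiber c N f) := by
  have hinj : Function.Injective fun (L : Fin k → StrictPartition) a => (L a).toFinset :=
    fun L L' h => funext fun a => StrictPartition.toFinset_injective (congrFun h a)
  calc _ = Nat.card ((fun (L : Fin k → StrictPartition) a => (L a).toFinset) ''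
          {L | L ∈ Sk k ∧ ∑ a, (L a).len = n ∧ ∑ a, (L a).size = N}) :=
        (Nat.card_image_of_injective hinj _).symm
    _ = _ := by
      rw [image_toFinset_Sk hc, Nat.card_coe_set_eq, Set.ncard_coe_finset,
        card_biUnion (pairwiseDisjoint_chainFiber c N _)]

theorem card_chainFiber_eq_coeff (c N : ℕ) (f : Fin k → ℕ) :
    (#(chainFiber c N f) : ℚ) =
      coeff N (∏ a : Fin k, strictPartGF (tailSum f a) (chainBound c f a)) :=
  (coeff_prod_sum_X_pow _ (fun _ s => ∑ i ∈ s, i) N).symm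

theorem prod_strictPartGF_chainBound {c : ℕ} (f : Fin k → ℕ) (h : tailSum f 0 ≤ c) :
    (∏ a : Fin k, strictPartGF (tailSum f a) (chainBound c f a)) * qPoch (c - tailSum f 0) =
      X ^ (∑ a, (a.val + 1) * triangle (f a) +
          ∑ p ∈ univ.filter (fun p : Fin k × Fin k => p.1 < p.2), (p.1.val + 1) * f p.1 * f p.2) *
        (∏ a, (qPoch (f a))⁻¹) * qPoch c := by
  have hm : ∀ a, chainBound c f (a + 1) ≤ chainBound c f a := by
    rintro (_ | a)
    exacts [h, tailSum_succ_le f a]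
  have hf : ∏ a ∈ range k, qPoch (tailSum f a - tailSum f (a + 1)) = ∏ a, qPoch (f a) := by
    rw [← Fin.prod_univ_eq_prod_range]
    refine prod_congr rfl fun a _ => ?_
    rw [tailSum_of_lt f a.isLt, Nat.add_sub_cancel]
  have htel := prod_strictPartGF_mul_qPoch (chainBound c f) hm (k + 1)
  rw [prod_range_succ (fun a => strictPartGF _ _), prod_range_succ' (fun a => qPoch _),
    sum_range_succ] at htel
  simp only [chainBound.eq_1, chainBound.eq_2, tailSum_of_le f le_rfl, strictPartGF_zero_left,
    qPoch_zero, hf, show triangle 0 = 0 from rfl, add_zero, mul_one] at htel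
  have hinv : (∏ a, qPoch (f a)) * ∏ a, (qPoch (f a))⁻¹ = 1 := by
    rw [← prod_mul_distrib]
    exact prod_eq_one fun a _ => by rw [mul_comm, qPoch_inv_mul]
  rw [Fin.prod_univ_eq_prod_range (fun a => strictPartGF (tailSum f a) (chainBound c f a)),
    ← sum_range_triangle_tailSum]
  linear_combination (∏ a, (qPoch (f a))⁻¹) * htel -
    (∏ a ∈ range k, strictPartGF (tailSum f a) (chainBound c f a)) * qPoch (c - tailSum f 0) *
      hinv

end Chains

/-- The tuple is indexed by `Fin k`, index `a : Fin k` playing the role of `a + 1`. -/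
theorem Sk_gf_general (k : ℕ) :
    (PowerSeries.mk (fun n => PowerSeries.mk (fun N =>
        (Nat.card {L : Fin k → StrictPartition //
          (∀ (a : Fin k) (h : a.val + 1 < k), (L ⟨a.val + 1, h⟩).first ≤ (L a).len) ∧
          (∑ a, (L a).len) = n ∧ (∑ a, (L a).size) = N} : ℚ))) :
      PowerSeries (PowerSeries ℚ)) =
      PowerSeries.mk (fun n =>
        ∑ f ∈ (Fintype.piFinset fun _ : Fin k => Finset.range (n + 1)).filter
            (fun f => ∑ a, (a.val + 1) * f a = n),
          (PowerSeries.X : PowerSeries ℚ) ^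
              (∑ a, (a.val + 1) * (f a * (f a + 1) / 2) +
                ∑ p ∈ Finset.univ.filter (fun p : Fin k × Fin k => p.1 < p.2),
                  (p.1.val + 1) * f p.1 * f p.2) *
            ∏ a, (qPoch (f a))⁻¹) := by
  ext n N
  simp only [coeff_mk, map_sum]
  refine (congrArg Nat.cast (card_Sk_eq_sum_card_chainFiber (c := N + n) le_self_add)).trans ?_
  push_cast
  refine sum_congr rfl fun f hf => ?_
  have hfn : tailSum f 0 ≤ n := (mem_filter.mp hf).2 ▸ tailSum_zero_le f
  rw [card_chainFiber_eq_coeff]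
  exact coeff_eq_of_mul_qPoch_eq (prod_strictPartGF_chainBound f (by omega)) (by omega) (by omega)

/-- For `k ≥ 1`, with `S_k` the set of `k`-tuples of strict partitions with
`ℓ(λ^{(i)}) ≥ (λ^{(i+1)})₁` for `1 ≤ i < k`:
`∑_{𝛌 ∈ S_k} x^{ℓ(𝛌)} q^{|𝛌|} = ∑_{i_1,…,i_k ≥ 0}
  q^{∑_a a·i_a(i_a+1)/2 + ∑_{a<b} a·i_a·i_b} x^{∑_a a·i_a} / ∏_a (q;q)_{i_a}`.
(Here the tuple is indexed by `Fin k`, index `a : Fin k` playing the role of `a+1`.) -/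
theorem Sk_gf (k : ℕ) (hk : 1 ≤ k) :
    (PowerSeries.mk (fun n => PowerSeries.mk (fun N =>
        (Nat.card {L : Fin k → StrictPartition //
          (∀ (a : Fin k) (h : a.val + 1 < k), (L ⟨a.val + 1, h⟩).first ≤ (L a).len) ∧
          (∑ a, (L a).len) = n ∧ (∑ a, (L a).size) = N} : ℚ))) :
      PowerSeries (PowerSeries ℚ)) =
      PowerSeries.mk (fun n =>
        ∑ f ∈ (Fintype.piFinset fun _ : Fin k => Finset.range (n + 1)).filter
            (fun f => ∑ a, (a.val + 1) * f a = n),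
          (PowerSeries.X : PowerSeries ℚ) ^
              (∑ a, (a.val + 1) * (f a * (f a + 1) / 2) +
                ∑ p ∈ Finset.univ.filter (fun p : Fin k × Fin k => p.1 < p.2),
                  (p.1.val + 1) * f p.1 * f p.2) *
            ∏ a, (qPoch (f a))⁻¹) :=
  Sk_gf_general k
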